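/- arXiv:1508.03195 — 4 statements merged into one kernel-verified Lean document; each statement's English description precedes it below -/
import Mathlib

section
/- The bilinear form α(ξ₁,ξ₂) = (-1/(128π²)) Σ_{τ∈S₄} sgn(τ) ∫₀¹ [ (ξ₁')_{τ(1)τ(2)} (ξ₂)_{τ(3)τ(4)} − (ξ₂')_{τ(1)τ(2)} (ξ₁)_{τ(3)τ(4)} ] dθ on L𝔰𝔬(4) satisfies the 2-cocycle identity: α([ξ₁,ξ₂],ξ₃) + α([ξ₂,ξ₃],ξ₁) + α([ξ₃,ξ₁],ξ₂) = 0. -/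
open scoped Real Matrix

/-- The 2-cochain `α` on `L𝔰𝔬(4)`. -/
noncomputable def loopAlpha (ξ₁ ξ₂ : ℝ → Matrix (Fin 4) (Fin 4) ℝ) : ℝ :=
  (-1 / (128 * π ^ 2)) *
    ∑ τ : Equiv.Perm (Fin 4), ((Equiv.Perm.sign τ : ℤ) : ℝ) *
      ∫ θ in (0:ℝ)..1,
        (deriv (fun t => ξ₁ t (τ 0) (τ 1)) θ * ξ₂ θ (τ 2) (τ 3)
          - deriv (fun t => ξ₂ t (τ 0) (τ 1)) θ * ξ₁ θ (τ 2) (τ 3))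

/-- A loop in `L𝔰𝔬(4)`: smooth (entrywise), 1-periodic, with skew-symmetric values. -/
def IsLoopSO4 (ξ : ℝ → Matrix (Fin 4) (Fin 4) ℝ) : Prop :=
  (∀ i j, ContDiff ℝ (⊤ : ℕ∞) fun θ => ξ θ i j) ∧ (∀ θ, ξ (θ + 1) = ξ θ) ∧
    (∀ θ, (ξ θ)ᵀ = -ξ θ)

/-- The pointwise commutator bracket on `L𝔰𝔬(4)`. -/
def loopBracket (ξ η : ℝ → Matrix (Fin 4) (Fin 4) ℝ) :
    ℝ → Matrix (Fin 4) (Fin 4) ℝ :=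
  fun θ => ξ θ * η θ - η θ * ξ θ


private lemma perm4_univ : (Finset.univ : Finset (Equiv.Perm (Fin 4))) =
    {(1 : Equiv.Perm (Fin 4)),
     (Equiv.swap (2:Fin 4) 3 : Equiv.Perm (Fin 4)),
     (Equiv.swap (1:Fin 4) 2 : Equiv.Perm (Fin 4)),
     (Equiv.swap (1:Fin 4) 2 * Equiv.swap (2:Fin 4) 3 : Equiv.Perm (Fin 4)),
     (Equiv.swap (1:Fin 4) 3 * Equiv.swap (3:Fin 4) 2 : Equiv.Perm (Fin 4)),
     (Equiv.swap (1:Fin 4) 3 : Equiv.Perm (Fin 4)),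
     (Equiv.swap (0:Fin 4) 1 : Equiv.Perm (Fin 4)),
     (Equiv.swap (0:Fin 4) 1 * Equiv.swap (2:Fin 4) 3 : Equiv.Perm (Fin 4)),
     (Equiv.swap (0:Fin 4) 1 * Equiv.swap (1:Fin 4) 2 : Equiv.Perm (Fin 4)),
     (Equiv.swap (0:Fin 4) 1 * Equiv.swap (1:Fin 4) 2 * Equiv.swap (2:Fin 4) 3 : Equiv.Perm (Fin 4)),
     (Equiv.swap (0:Fin 4) 1 * Equiv.swap (1:Fin 4) 3 * Equiv.swap (3:Fin 4) 2 : Equiv.Perm (Fin 4)),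
     (Equiv.swap (0:Fin 4) 1 * Equiv.swap (1:Fin 4) 3 : Equiv.Perm (Fin 4)),
     (Equiv.swap (0:Fin 4) 2 * Equiv.swap (2:Fin 4) 1 : Equiv.Perm (Fin 4)),
     (Equiv.swap (0:Fin 4) 2 * Equiv.swap (2:Fin 4) 3 * Equiv.swap (3:Fin 4) 1 : Equiv.Perm (Fin 4)),
     (Equiv.swap (0:Fin 4) 2 : Equiv.Perm (Fin 4)),
     (Equiv.swap (0:Fin 4) 2 * Equiv.swap (2:Fin 4) 3 : Equiv.Perm (Fin 4)),
     (Equiv.swap (0:Fin 4) 2 * Equiv.swap (1:Fin 4) 3 : Equiv.Perm (Fin 4)),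
     (Equiv.swap (0:Fin 4) 2 * Equiv.swap (2:Fin 4) 1 * Equiv.swap (1:Fin 4) 3 : Equiv.Perm (Fin 4)),
     (Equiv.swap (0:Fin 4) 3 * Equiv.swap (3:Fin 4) 2 * Equiv.swap (2:Fin 4) 1 : Equiv.Perm (Fin 4)),
     (Equiv.swap (0:Fin 4) 3 * Equiv.swap (3:Fin 4) 1 : Equiv.Perm (Fin 4)),
     (Equiv.swap (0:Fin 4) 3 * Equiv.swap (3:Fin 4) 2 : Equiv.Perm (Fin 4)),
     (Equiv.swap (0:Fin 4) 3 : Equiv.Perm (Fin 4)),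
     (Equiv.swap (0:Fin 4) 3 * Equiv.swap (3:Fin 4) 1 * Equiv.swap (1:Fin 4) 2 : Equiv.Perm (Fin 4)),
     (Equiv.swap (0:Fin 4) 3 * Equiv.swap (1:Fin 4) 2 : Equiv.Perm (Fin 4))} := by decide

private lemma perm4_sum (g : ℝ → Fin 4 → Fin 4 → Fin 4 → Fin 4 → ℝ) :
    ∑ τ : Equiv.Perm (Fin 4), g (((Equiv.Perm.sign τ : ℤˣ) : ℤ) : ℝ) (τ 0) (τ 1) (τ 2) (τ 3)
    = g 1 0 1 2 3 +
      g (-1) 0 1 3 2 +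
      g (-1) 0 2 1 3 +
      g 1 0 2 3 1 +
      g 1 0 3 1 2 +
      g (-1) 0 3 2 1 +
      g (-1) 1 0 2 3 +
      g 1 1 0 3 2 +
      g 1 1 2 0 3 +
      g (-1) 1 2 3 0 +
      g (-1) 1 3 0 2 +
      g 1 1 3 2 0 +
      g 1 2 0 1 3 +
      g (-1) 2 0 3 1 +
      g (-1) 2 1 0 3 +
      g 1 2 1 3 0 +
      g 1 2 3 0 1 +
      g (-1) 2 3 1 0 +
      g (-1) 3 0 1 2 +
      g 1 3 0 2 1 +
      g 1 3 1 0 2 +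
      g (-1) 3 1 2 0 +
      g (-1) 3 2 0 1 +
      g 1 3 2 1 0 := by
  rw [perm4_univ]
  rw [Finset.sum_insert (by decide), Finset.sum_insert (by decide), Finset.sum_insert (by decide), Finset.sum_insert (by decide), Finset.sum_insert (by decide), Finset.sum_insert (by decide), Finset.sum_insert (by decide), Finset.sum_insert (by decide), Finset.sum_insert (by decide), Finset.sum_insert (by decide), Finset.sum_insert (by decide), Finset.sum_insert (by decide), Finset.sum_insert (by decide), Finset.sum_insert (by decide), Finset.sum_insert (by decide), Finset.sum_insert (by decide), Finset.sum_insert (by decide), Finset.sum_insert (by decide), Finset.sum_insert (by decide), Finset.sum_insert (by decide), Finset.sum_insert (by decide), Finset.sum_insert (by decide), Finset.sum_insert (by decide), Finset.sum_singleton]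
  simp only [Units.val_one, Units.val_neg, Int.cast_one, Int.cast_neg,
    show Equiv.Perm.sign (1 : Equiv.Perm (Fin 4)) = 1 from by decide,
    show (1 : Equiv.Perm (Fin 4)) 0 = 0 from by decide,
    show (1 : Equiv.Perm (Fin 4)) 1 = 1 from by decide,
    show (1 : Equiv.Perm (Fin 4)) 2 = 2 from by decide,
    show (1 : Equiv.Perm (Fin 4)) 3 = 3 from by decide,
    show Equiv.Perm.sign (Equiv.swap (2:Fin 4) 3 : Equiv.Perm (Fin 4)) = -1 from by decide,
    show (Equiv.swap (2:Fin 4) 3 : Equiv.Perm (Fin 4)) 0 = 0 from by decide,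
    show (Equiv.swap (2:Fin 4) 3 : Equiv.Perm (Fin 4)) 1 = 1 from by decide,
    show (Equiv.swap (2:Fin 4) 3 : Equiv.Perm (Fin 4)) 2 = 3 from by decide,
    show (Equiv.swap (2:Fin 4) 3 : Equiv.Perm (Fin 4)) 3 = 2 from by decide,
    show Equiv.Perm.sign (Equiv.swap (1:Fin 4) 2 : Equiv.Perm (Fin 4)) = -1 from by decide,
    show (Equiv.swap (1:Fin 4) 2 : Equiv.Perm (Fin 4)) 0 = 0 from by decide,
    show (Equiv.swap (1:Fin 4) 2 : Equiv.Perm (Fin 4)) 1 = 2 from by decide,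
    show (Equiv.swap (1:Fin 4) 2 : Equiv.Perm (Fin 4)) 2 = 1 from by decide,
    show (Equiv.swap (1:Fin 4) 2 : Equiv.Perm (Fin 4)) 3 = 3 from by decide,
    show Equiv.Perm.sign (Equiv.swap (1:Fin 4) 2 * Equiv.swap (2:Fin 4) 3 : Equiv.Perm (Fin 4)) = 1 from by decide,
    show (Equiv.swap (1:Fin 4) 2 * Equiv.swap (2:Fin 4) 3 : Equiv.Perm (Fin 4)) 0 = 0 from by decide,
    show (Equiv.swap (1:Fin 4) 2 * Equiv.swap (2:Fin 4) 3 : Equiv.Perm (Fin 4)) 1 = 2 from by decide,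
    show (Equiv.swap (1:Fin 4) 2 * Equiv.swap (2:Fin 4) 3 : Equiv.Perm (Fin 4)) 2 = 3 from by decide,
    show (Equiv.swap (1:Fin 4) 2 * Equiv.swap (2:Fin 4) 3 : Equiv.Perm (Fin 4)) 3 = 1 from by decide,
    show Equiv.Perm.sign (Equiv.swap (1:Fin 4) 3 * Equiv.swap (3:Fin 4) 2 : Equiv.Perm (Fin 4)) = 1 from by decide,
    show (Equiv.swap (1:Fin 4) 3 * Equiv.swap (3:Fin 4) 2 : Equiv.Perm (Fin 4)) 0 = 0 from by decide,
    show (Equiv.swap (1:Fin 4) 3 * Equiv.swap (3:Fin 4) 2 : Equiv.Perm (Fin 4)) 1 = 3 from by decide,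
    show (Equiv.swap (1:Fin 4) 3 * Equiv.swap (3:Fin 4) 2 : Equiv.Perm (Fin 4)) 2 = 1 from by decide,
    show (Equiv.swap (1:Fin 4) 3 * Equiv.swap (3:Fin 4) 2 : Equiv.Perm (Fin 4)) 3 = 2 from by decide,
    show Equiv.Perm.sign (Equiv.swap (1:Fin 4) 3 : Equiv.Perm (Fin 4)) = -1 from by decide,
    show (Equiv.swap (1:Fin 4) 3 : Equiv.Perm (Fin 4)) 0 = 0 from by decide,
    show (Equiv.swap (1:Fin 4) 3 : Equiv.Perm (Fin 4)) 1 = 3 from by decide,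
    show (Equiv.swap (1:Fin 4) 3 : Equiv.Perm (Fin 4)) 2 = 2 from by decide,
    show (Equiv.swap (1:Fin 4) 3 : Equiv.Perm (Fin 4)) 3 = 1 from by decide,
    show Equiv.Perm.sign (Equiv.swap (0:Fin 4) 1 : Equiv.Perm (Fin 4)) = -1 from by decide,
    show (Equiv.swap (0:Fin 4) 1 : Equiv.Perm (Fin 4)) 0 = 1 from by decide,
    show (Equiv.swap (0:Fin 4) 1 : Equiv.Perm (Fin 4)) 1 = 0 from by decide,
    show (Equiv.swap (0:Fin 4) 1 : Equiv.Perm (Fin 4)) 2 = 2 from by decide,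
    show (Equiv.swap (0:Fin 4) 1 : Equiv.Perm (Fin 4)) 3 = 3 from by decide,
    show Equiv.Perm.sign (Equiv.swap (0:Fin 4) 1 * Equiv.swap (2:Fin 4) 3 : Equiv.Perm (Fin 4)) = 1 from by decide,
    show (Equiv.swap (0:Fin 4) 1 * Equiv.swap (2:Fin 4) 3 : Equiv.Perm (Fin 4)) 0 = 1 from by decide,
    show (Equiv.swap (0:Fin 4) 1 * Equiv.swap (2:Fin 4) 3 : Equiv.Perm (Fin 4)) 1 = 0 from by decide,
    show (Equiv.swap (0:Fin 4) 1 * Equiv.swap (2:Fin 4) 3 : Equiv.Perm (Fin 4)) 2 = 3 from by decide,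
    show (Equiv.swap (0:Fin 4) 1 * Equiv.swap (2:Fin 4) 3 : Equiv.Perm (Fin 4)) 3 = 2 from by decide,
    show Equiv.Perm.sign (Equiv.swap (0:Fin 4) 1 * Equiv.swap (1:Fin 4) 2 : Equiv.Perm (Fin 4)) = 1 from by decide,
    show (Equiv.swap (0:Fin 4) 1 * Equiv.swap (1:Fin 4) 2 : Equiv.Perm (Fin 4)) 0 = 1 from by decide,
    show (Equiv.swap (0:Fin 4) 1 * Equiv.swap (1:Fin 4) 2 : Equiv.Perm (Fin 4)) 1 = 2 from by decide,
    show (Equiv.swap (0:Fin 4) 1 * Equiv.swap (1:Fin 4) 2 : Equiv.Perm (Fin 4)) 2 = 0 from by decide,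
    show (Equiv.swap (0:Fin 4) 1 * Equiv.swap (1:Fin 4) 2 : Equiv.Perm (Fin 4)) 3 = 3 from by decide,
    show Equiv.Perm.sign (Equiv.swap (0:Fin 4) 1 * Equiv.swap (1:Fin 4) 2 * Equiv.swap (2:Fin 4) 3 : Equiv.Perm (Fin 4)) = -1 from by decide,
    show (Equiv.swap (0:Fin 4) 1 * Equiv.swap (1:Fin 4) 2 * Equiv.swap (2:Fin 4) 3 : Equiv.Perm (Fin 4)) 0 = 1 from by decide,
    show (Equiv.swap (0:Fin 4) 1 * Equiv.swap (1:Fin 4) 2 * Equiv.swap (2:Fin 4) 3 : Equiv.Perm (Fin 4)) 1 = 2 from by decide,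
    show (Equiv.swap (0:Fin 4) 1 * Equiv.swap (1:Fin 4) 2 * Equiv.swap (2:Fin 4) 3 : Equiv.Perm (Fin 4)) 2 = 3 from by decide,
    show (Equiv.swap (0:Fin 4) 1 * Equiv.swap (1:Fin 4) 2 * Equiv.swap (2:Fin 4) 3 : Equiv.Perm (Fin 4)) 3 = 0 from by decide,
    show Equiv.Perm.sign (Equiv.swap (0:Fin 4) 1 * Equiv.swap (1:Fin 4) 3 * Equiv.swap (3:Fin 4) 2 : Equiv.Perm (Fin 4)) = -1 from by decide,
    show (Equiv.swap (0:Fin 4) 1 * Equiv.swap (1:Fin 4) 3 * Equiv.swap (3:Fin 4) 2 : Equiv.Perm (Fin 4)) 0 = 1 from by decide,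
    show (Equiv.swap (0:Fin 4) 1 * Equiv.swap (1:Fin 4) 3 * Equiv.swap (3:Fin 4) 2 : Equiv.Perm (Fin 4)) 1 = 3 from by decide,
    show (Equiv.swap (0:Fin 4) 1 * Equiv.swap (1:Fin 4) 3 * Equiv.swap (3:Fin 4) 2 : Equiv.Perm (Fin 4)) 2 = 0 from by decide,
    show (Equiv.swap (0:Fin 4) 1 * Equiv.swap (1:Fin 4) 3 * Equiv.swap (3:Fin 4) 2 : Equiv.Perm (Fin 4)) 3 = 2 from by decide,
    show Equiv.Perm.sign (Equiv.swap (0:Fin 4) 1 * Equiv.swap (1:Fin 4) 3 : Equiv.Perm (Fin 4)) = 1 from by decide,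
    show (Equiv.swap (0:Fin 4) 1 * Equiv.swap (1:Fin 4) 3 : Equiv.Perm (Fin 4)) 0 = 1 from by decide,
    show (Equiv.swap (0:Fin 4) 1 * Equiv.swap (1:Fin 4) 3 : Equiv.Perm (Fin 4)) 1 = 3 from by decide,
    show (Equiv.swap (0:Fin 4) 1 * Equiv.swap (1:Fin 4) 3 : Equiv.Perm (Fin 4)) 2 = 2 from by decide,
    show (Equiv.swap (0:Fin 4) 1 * Equiv.swap (1:Fin 4) 3 : Equiv.Perm (Fin 4)) 3 = 0 from by decide,
    show Equiv.Perm.sign (Equiv.swap (0:Fin 4) 2 * Equiv.swap (2:Fin 4) 1 : Equiv.Perm (Fin 4)) = 1 from by decide,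
    show (Equiv.swap (0:Fin 4) 2 * Equiv.swap (2:Fin 4) 1 : Equiv.Perm (Fin 4)) 0 = 2 from by decide,
    show (Equiv.swap (0:Fin 4) 2 * Equiv.swap (2:Fin 4) 1 : Equiv.Perm (Fin 4)) 1 = 0 from by decide,
    show (Equiv.swap (0:Fin 4) 2 * Equiv.swap (2:Fin 4) 1 : Equiv.Perm (Fin 4)) 2 = 1 from by decide,
    show (Equiv.swap (0:Fin 4) 2 * Equiv.swap (2:Fin 4) 1 : Equiv.Perm (Fin 4)) 3 = 3 from by decide,
    show Equiv.Perm.sign (Equiv.swap (0:Fin 4) 2 * Equiv.swap (2:Fin 4) 3 * Equiv.swap (3:Fin 4) 1 : Equiv.Perm (Fin 4)) = -1 from by decide,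
    show (Equiv.swap (0:Fin 4) 2 * Equiv.swap (2:Fin 4) 3 * Equiv.swap (3:Fin 4) 1 : Equiv.Perm (Fin 4)) 0 = 2 from by decide,
    show (Equiv.swap (0:Fin 4) 2 * Equiv.swap (2:Fin 4) 3 * Equiv.swap (3:Fin 4) 1 : Equiv.Perm (Fin 4)) 1 = 0 from by decide,
    show (Equiv.swap (0:Fin 4) 2 * Equiv.swap (2:Fin 4) 3 * Equiv.swap (3:Fin 4) 1 : Equiv.Perm (Fin 4)) 2 = 3 from by decide,
    show (Equiv.swap (0:Fin 4) 2 * Equiv.swap (2:Fin 4) 3 * Equiv.swap (3:Fin 4) 1 : Equiv.Perm (Fin 4)) 3 = 1 from by decide,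
    show Equiv.Perm.sign (Equiv.swap (0:Fin 4) 2 : Equiv.Perm (Fin 4)) = -1 from by decide,
    show (Equiv.swap (0:Fin 4) 2 : Equiv.Perm (Fin 4)) 0 = 2 from by decide,
    show (Equiv.swap (0:Fin 4) 2 : Equiv.Perm (Fin 4)) 1 = 1 from by decide,
    show (Equiv.swap (0:Fin 4) 2 : Equiv.Perm (Fin 4)) 2 = 0 from by decide,
    show (Equiv.swap (0:Fin 4) 2 : Equiv.Perm (Fin 4)) 3 = 3 from by decide,
    show Equiv.Perm.sign (Equiv.swap (0:Fin 4) 2 * Equiv.swap (2:Fin 4) 3 : Equiv.Perm (Fin 4)) = 1 from by decide,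
    show (Equiv.swap (0:Fin 4) 2 * Equiv.swap (2:Fin 4) 3 : Equiv.Perm (Fin 4)) 0 = 2 from by decide,
    show (Equiv.swap (0:Fin 4) 2 * Equiv.swap (2:Fin 4) 3 : Equiv.Perm (Fin 4)) 1 = 1 from by decide,
    show (Equiv.swap (0:Fin 4) 2 * Equiv.swap (2:Fin 4) 3 : Equiv.Perm (Fin 4)) 2 = 3 from by decide,
    show (Equiv.swap (0:Fin 4) 2 * Equiv.swap (2:Fin 4) 3 : Equiv.Perm (Fin 4)) 3 = 0 from by decide,
    show Equiv.Perm.sign (Equiv.swap (0:Fin 4) 2 * Equiv.swap (1:Fin 4) 3 : Equiv.Perm (Fin 4)) = 1 from by decide,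
    show (Equiv.swap (0:Fin 4) 2 * Equiv.swap (1:Fin 4) 3 : Equiv.Perm (Fin 4)) 0 = 2 from by decide,
    show (Equiv.swap (0:Fin 4) 2 * Equiv.swap (1:Fin 4) 3 : Equiv.Perm (Fin 4)) 1 = 3 from by decide,
    show (Equiv.swap (0:Fin 4) 2 * Equiv.swap (1:Fin 4) 3 : Equiv.Perm (Fin 4)) 2 = 0 from by decide,
    show (Equiv.swap (0:Fin 4) 2 * Equiv.swap (1:Fin 4) 3 : Equiv.Perm (Fin 4)) 3 = 1 from by decide,
    show Equiv.Perm.sign (Equiv.swap (0:Fin 4) 2 * Equiv.swap (2:Fin 4) 1 * Equiv.swap (1:Fin 4) 3 : Equiv.Perm (Fin 4)) = -1 from by decide,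
    show (Equiv.swap (0:Fin 4) 2 * Equiv.swap (2:Fin 4) 1 * Equiv.swap (1:Fin 4) 3 : Equiv.Perm (Fin 4)) 0 = 2 from by decide,
    show (Equiv.swap (0:Fin 4) 2 * Equiv.swap (2:Fin 4) 1 * Equiv.swap (1:Fin 4) 3 : Equiv.Perm (Fin 4)) 1 = 3 from by decide,
    show (Equiv.swap (0:Fin 4) 2 * Equiv.swap (2:Fin 4) 1 * Equiv.swap (1:Fin 4) 3 : Equiv.Perm (Fin 4)) 2 = 1 from by decide,
    show (Equiv.swap (0:Fin 4) 2 * Equiv.swap (2:Fin 4) 1 * Equiv.swap (1:Fin 4) 3 : Equiv.Perm (Fin 4)) 3 = 0 from by decide,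
    show Equiv.Perm.sign (Equiv.swap (0:Fin 4) 3 * Equiv.swap (3:Fin 4) 2 * Equiv.swap (2:Fin 4) 1 : Equiv.Perm (Fin 4)) = -1 from by decide,
    show (Equiv.swap (0:Fin 4) 3 * Equiv.swap (3:Fin 4) 2 * Equiv.swap (2:Fin 4) 1 : Equiv.Perm (Fin 4)) 0 = 3 from by decide,
    show (Equiv.swap (0:Fin 4) 3 * Equiv.swap (3:Fin 4) 2 * Equiv.swap (2:Fin 4) 1 : Equiv.Perm (Fin 4)) 1 = 0 from by decide,
    show (Equiv.swap (0:Fin 4) 3 * Equiv.swap (3:Fin 4) 2 * Equiv.swap (2:Fin 4) 1 : Equiv.Perm (Fin 4)) 2 = 1 from by decide,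
    show (Equiv.swap (0:Fin 4) 3 * Equiv.swap (3:Fin 4) 2 * Equiv.swap (2:Fin 4) 1 : Equiv.Perm (Fin 4)) 3 = 2 from by decide,
    show Equiv.Perm.sign (Equiv.swap (0:Fin 4) 3 * Equiv.swap (3:Fin 4) 1 : Equiv.Perm (Fin 4)) = 1 from by decide,
    show (Equiv.swap (0:Fin 4) 3 * Equiv.swap (3:Fin 4) 1 : Equiv.Perm (Fin 4)) 0 = 3 from by decide,
    show (Equiv.swap (0:Fin 4) 3 * Equiv.swap (3:Fin 4) 1 : Equiv.Perm (Fin 4)) 1 = 0 from by decide,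
    show (Equiv.swap (0:Fin 4) 3 * Equiv.swap (3:Fin 4) 1 : Equiv.Perm (Fin 4)) 2 = 2 from by decide,
    show (Equiv.swap (0:Fin 4) 3 * Equiv.swap (3:Fin 4) 1 : Equiv.Perm (Fin 4)) 3 = 1 from by decide,
    show Equiv.Perm.sign (Equiv.swap (0:Fin 4) 3 * Equiv.swap (3:Fin 4) 2 : Equiv.Perm (Fin 4)) = 1 from by decide,
    show (Equiv.swap (0:Fin 4) 3 * Equiv.swap (3:Fin 4) 2 : Equiv.Perm (Fin 4)) 0 = 3 from by decide,
    show (Equiv.swap (0:Fin 4) 3 * Equiv.swap (3:Fin 4) 2 : Equiv.Perm (Fin 4)) 1 = 1 from by decide,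
    show (Equiv.swap (0:Fin 4) 3 * Equiv.swap (3:Fin 4) 2 : Equiv.Perm (Fin 4)) 2 = 0 from by decide,
    show (Equiv.swap (0:Fin 4) 3 * Equiv.swap (3:Fin 4) 2 : Equiv.Perm (Fin 4)) 3 = 2 from by decide,
    show Equiv.Perm.sign (Equiv.swap (0:Fin 4) 3 : Equiv.Perm (Fin 4)) = -1 from by decide,
    show (Equiv.swap (0:Fin 4) 3 : Equiv.Perm (Fin 4)) 0 = 3 from by decide,
    show (Equiv.swap (0:Fin 4) 3 : Equiv.Perm (Fin 4)) 1 = 1 from by decide,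
    show (Equiv.swap (0:Fin 4) 3 : Equiv.Perm (Fin 4)) 2 = 2 from by decide,
    show (Equiv.swap (0:Fin 4) 3 : Equiv.Perm (Fin 4)) 3 = 0 from by decide,
    show Equiv.Perm.sign (Equiv.swap (0:Fin 4) 3 * Equiv.swap (3:Fin 4) 1 * Equiv.swap (1:Fin 4) 2 : Equiv.Perm (Fin 4)) = -1 from by decide,
    show (Equiv.swap (0:Fin 4) 3 * Equiv.swap (3:Fin 4) 1 * Equiv.swap (1:Fin 4) 2 : Equiv.Perm (Fin 4)) 0 = 3 from by decide,
    show (Equiv.swap (0:Fin 4) 3 * Equiv.swap (3:Fin 4) 1 * Equiv.swap (1:Fin 4) 2 : Equiv.Perm (Fin 4)) 1 = 2 from by decide,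
    show (Equiv.swap (0:Fin 4) 3 * Equiv.swap (3:Fin 4) 1 * Equiv.swap (1:Fin 4) 2 : Equiv.Perm (Fin 4)) 2 = 0 from by decide,
    show (Equiv.swap (0:Fin 4) 3 * Equiv.swap (3:Fin 4) 1 * Equiv.swap (1:Fin 4) 2 : Equiv.Perm (Fin 4)) 3 = 1 from by decide,
    show Equiv.Perm.sign (Equiv.swap (0:Fin 4) 3 * Equiv.swap (1:Fin 4) 2 : Equiv.Perm (Fin 4)) = 1 from by decide,
    show (Equiv.swap (0:Fin 4) 3 * Equiv.swap (1:Fin 4) 2 : Equiv.Perm (Fin 4)) 0 = 3 from by decide,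
    show (Equiv.swap (0:Fin 4) 3 * Equiv.swap (1:Fin 4) 2 : Equiv.Perm (Fin 4)) 1 = 2 from by decide,
    show (Equiv.swap (0:Fin 4) 3 * Equiv.swap (1:Fin 4) 2 : Equiv.Perm (Fin 4)) 2 = 1 from by decide,
    show (Equiv.swap (0:Fin 4) 3 * Equiv.swap (1:Fin 4) 2 : Equiv.Perm (Fin 4)) 3 = 0 from by decide]
  ring

private lemma skewFacts (A : Matrix (Fin 4) (Fin 4) ℝ) (h : Aᵀ = -A) :
    A 0 0 = 0 ∧ A 1 1 = 0 ∧ A 2 2 = 0 ∧ A 3 3 = 0 ∧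
    A 1 0 = -A 0 1 ∧ A 2 0 = -A 0 2 ∧ A 3 0 = -A 0 3 ∧
    A 2 1 = -A 1 2 ∧ A 3 1 = -A 1 3 ∧ A 3 2 = -A 2 3 := by
  have h' : ∀ i j, A j i = -A i j := fun i j => by
    simpa [Matrix.transpose_apply] using congrFun (congrFun h i) j
  exact ⟨by linarith [h' 0 0], by linarith [h' 1 1], by linarith [h' 2 2],
    by linarith [h' 3 3], h' 0 1, h' 0 2, h' 0 3, h' 1 2, h' 1 3, h' 2 3⟩

set_option maxHeartbeats 4000000 in
private lemma key (A B C A' B' C' : Matrix (Fin 4) (Fin 4) ℝ)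
    (hA : Aᵀ = -A) (hB : Bᵀ = -B) (hC : Cᵀ = -C)
    (hA' : A'ᵀ = -A') (hB' : B'ᵀ = -B') (hC' : C'ᵀ = -C') :
    (∑ τ : Equiv.Perm (Fin 4), ((Equiv.Perm.sign τ : ℤ) : ℝ) *
      ((A' * B - B * A' + (A * B' - B' * A)) (τ 0) (τ 1) * C (τ 2) (τ 3)
        - C' (τ 0) (τ 1) * (A * B - B * A) (τ 2) (τ 3)))
    + (∑ τ : Equiv.Perm (Fin 4), ((Equiv.Perm.sign τ : ℤ) : ℝ) *
      ((B' * C - C * B' + (B * C' - C' * B)) (τ 0) (τ 1) * A (τ 2) (τ 3)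
        - A' (τ 0) (τ 1) * (B * C - C * B) (τ 2) (τ 3)))
    + (∑ τ : Equiv.Perm (Fin 4), ((Equiv.Perm.sign τ : ℤ) : ℝ) *
      ((C' * A - A * C' + (C * A' - A' * C)) (τ 0) (τ 1) * B (τ 2) (τ 3)
        - B' (τ 0) (τ 1) * (C * A - A * C) (τ 2) (τ 3)))
    = ∑ τ : Equiv.Perm (Fin 4), ((Equiv.Perm.sign τ : ℤ) : ℝ) *
      (A' (τ 0) (τ 1) * (B * C - C * B) (τ 2) (τ 3)
        + A (τ 0) (τ 1) * (B' * C - C * B' + (B * C' - C' * B)) (τ 2) (τ 3)) := by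
  obtain ⟨a00,a11,a22,a33,a10,a20,a30,a21,a31,a32⟩ := skewFacts A hA
  obtain ⟨b00,b11,b22,b33,b10,b20,b30,b21,b31,b32⟩ := skewFacts B hB
  obtain ⟨c00,c11,c22,c33,c10,c20,c30,c21,c31,c32⟩ := skewFacts C hC
  obtain ⟨ad00,ad11,ad22,ad33,ad10,ad20,ad30,ad21,ad31,ad32⟩ := skewFacts A' hA'
  obtain ⟨bd00,bd11,bd22,bd33,bd10,bd20,bd30,bd21,bd31,bd32⟩ := skewFacts B' hB'
  obtain ⟨cd00,cd11,cd22,cd33,cd10,cd20,cd30,cd21,cd31,cd32⟩ := skewFacts C' hC'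
  rw [perm4_sum (fun s i j k l => s * ((A' * B - B * A' + (A * B' - B' * A)) i j * C k l - C' i j * (A * B - B * A) k l)),
    perm4_sum (fun s i j k l => s * ((B' * C - C * B' + (B * C' - C' * B)) i j * A k l - A' i j * (B * C - C * B) k l)),
    perm4_sum (fun s i j k l => s * ((C' * A - A * C' + (C * A' - A' * C)) i j * B k l - B' i j * (C * A - A * C) k l)),
    perm4_sum (fun s i j k l => s * (A' i j * (B * C - C * B) k l + A i j * (B' * C - C * B' + (B * C' - C' * B)) k l))]
  simp only [Matrix.sub_apply, Matrix.add_apply, Matrix.mul_apply, Fin.sum_univ_four]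
  rw [a00, a11, a22, a33, a10, a20, a30, a21, a31, a32, b00, b11, b22, b33, b10, b20, b30, b21, b31, b32, c00, c11, c22, c33, c10, c20, c30, c21, c31, c32, ad00, ad11, ad22, ad33, ad10, ad20, ad30, ad21, ad31, ad32, bd00, bd11, bd22, bd33, bd10, bd20, bd30, bd21, bd31, bd32, cd00, cd11, cd22, cd33, cd10, cd20, cd30, cd21, cd31, cd32]
  ring

private noncomputable def dmat (ξ : ℝ → Matrix (Fin 4) (Fin 4) ℝ) (θ : ℝ) :
    Matrix (Fin 4) (Fin 4) ℝ :=
  Matrix.of fun i j => deriv (fun t => ξ t i j) θ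

private noncomputable def Ffun (ξ₁ ξ₂ ξ₃ : ℝ → Matrix (Fin 4) (Fin 4) ℝ) : ℝ → ℝ := fun θ =>
  ∑ τ : Equiv.Perm (Fin 4), ((Equiv.Perm.sign τ : ℤ) : ℝ) *
    (ξ₁ θ (τ 0) (τ 1) * (ξ₂ θ * ξ₃ θ - ξ₃ θ * ξ₂ θ) (τ 2) (τ 3))

private noncomputable def Gfun (ξ₁ ξ₂ ξ₃ : ℝ → Matrix (Fin 4) (Fin 4) ℝ) : ℝ → ℝ := fun θ =>
  ∑ τ : Equiv.Perm (Fin 4), ((Equiv.Perm.sign τ : ℤ) : ℝ) *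
    (dmat ξ₁ θ (τ 0) (τ 1) * (ξ₂ θ * ξ₃ θ - ξ₃ θ * ξ₂ θ) (τ 2) (τ 3)
      + ξ₁ θ (τ 0) (τ 1) *
        (dmat ξ₂ θ * ξ₃ θ - ξ₃ θ * dmat ξ₂ θ + (ξ₂ θ * dmat ξ₃ θ - dmat ξ₃ θ * ξ₂ θ)) (τ 2) (τ 3))

private lemma hasDerivAt_entry {ξ : ℝ → Matrix (Fin 4) (Fin 4) ℝ}
    (hs : ∀ i j, ContDiff ℝ (⊤ : ℕ∞) fun θ => ξ θ i j) (θ : ℝ) (i j : Fin 4) :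
    HasDerivAt (fun t => ξ t i j) (dmat ξ θ i j) θ :=
  (((hs i j).differentiable (by simp)) θ).hasDerivAt

private lemma hasDerivAt_br {ξ η : ℝ → Matrix (Fin 4) (Fin 4) ℝ}
    (hξ : ∀ i j, ContDiff ℝ (⊤ : ℕ∞) fun θ => ξ θ i j)
    (hη : ∀ i j, ContDiff ℝ (⊤ : ℕ∞) fun θ => η θ i j) (θ : ℝ) (i j : Fin 4) :
    HasDerivAt (fun t => (ξ t * η t - η t * ξ t) i j)
      ((dmat ξ θ * η θ - η θ * dmat ξ θ + (ξ θ * dmat η θ - dmat η θ * ξ θ)) i j) θ := by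
  have h1 := hasDerivAt_entry hξ θ
  have h2 := hasDerivAt_entry hη θ
  have key : HasDerivAt (fun t => (∑ k, ξ t i k * η t k j) - ∑ k, η t i k * ξ t k j)
      ((∑ k, (dmat ξ θ i k * η θ k j + ξ θ i k * dmat η θ k j))
        - ∑ k, (dmat η θ i k * ξ θ k j + η θ i k * dmat ξ θ k j)) θ :=
    (HasDerivAt.fun_sum fun k _ => (h1 i k).mul (h2 k j)).sub
      (HasDerivAt.fun_sum fun k _ => (h2 i k).mul (h1 k j))
  have e1 : (fun t => (ξ t * η t - η t * ξ t) i j)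
      = fun t => (∑ k, ξ t i k * η t k j) - ∑ k, η t i k * ξ t k j := by
    funext t; simp [Matrix.sub_apply, Matrix.mul_apply]
  rw [e1]
  convert key using 1
  simp only [Matrix.add_apply, Matrix.sub_apply, Matrix.mul_apply, Fin.sum_univ_four]
  ring

private lemma cont_dentry {ξ : ℝ → Matrix (Fin 4) (Fin 4) ℝ}
    (hs : ∀ i j, ContDiff ℝ (⊤ : ℕ∞) fun θ => ξ θ i j) (i j : Fin 4) :
    Continuous fun θ => dmat ξ θ i j :=
  (hs i j).continuous_deriv (by simp)

private lemma cont_br {ξ η : ℝ → Matrix (Fin 4) (Fin 4) ℝ}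
    (hξ : ∀ i j, ContDiff ℝ (⊤ : ℕ∞) fun θ => ξ θ i j)
    (hη : ∀ i j, ContDiff ℝ (⊤ : ℕ∞) fun θ => η θ i j) (i j : Fin 4) :
    Continuous fun θ => (ξ θ * η θ - η θ * ξ θ) i j := by
  simp only [Matrix.sub_apply, Matrix.mul_apply]
  exact (continuous_finset_sum _ fun k _ => ((hξ i k).continuous.mul (hη k j).continuous)).sub
    (continuous_finset_sum _ fun k _ => ((hη i k).continuous.mul (hξ k j).continuous))

private lemma cont_dbr {ξ η : ℝ → Matrix (Fin 4) (Fin 4) ℝ}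
    (hξ : ∀ i j, ContDiff ℝ (⊤ : ℕ∞) fun θ => ξ θ i j)
    (hη : ∀ i j, ContDiff ℝ (⊤ : ℕ∞) fun θ => η θ i j) (i j : Fin 4) :
    Continuous fun θ =>
      (dmat ξ θ * η θ - η θ * dmat ξ θ + (ξ θ * dmat η θ - dmat η θ * ξ θ)) i j := by
  simp only [Matrix.add_apply, Matrix.sub_apply, Matrix.mul_apply]
  have c1 := continuous_finset_sum (Finset.univ : Finset (Fin 4))
    fun k _ => (cont_dentry hξ i k).mul (hη k j).continuous
  have c2 := continuous_finset_sum (Finset.univ : Finset (Fin 4))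
    fun k _ => (hη i k).continuous.mul (cont_dentry hξ k j)
  have c3 := continuous_finset_sum (Finset.univ : Finset (Fin 4))
    fun k _ => (hξ i k).continuous.mul (cont_dentry hη k j)
  have c4 := continuous_finset_sum (Finset.univ : Finset (Fin 4))
    fun k _ => (cont_dentry hη i k).mul (hξ k j).continuous
  exact (c1.sub c2).add (c3.sub c4)

private lemma cont_G {ξ₁ ξ₂ ξ₃ : ℝ → Matrix (Fin 4) (Fin 4) ℝ}
    (hs₁ : ∀ i j, ContDiff ℝ (⊤ : ℕ∞) fun θ => ξ₁ θ i j)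
    (hs₂ : ∀ i j, ContDiff ℝ (⊤ : ℕ∞) fun θ => ξ₂ θ i j)
    (hs₃ : ∀ i j, ContDiff ℝ (⊤ : ℕ∞) fun θ => ξ₃ θ i j) :
    Continuous (Gfun ξ₁ ξ₂ ξ₃) := by
  unfold Gfun
  exact continuous_finset_sum _ fun τ _ => continuous_const.mul
    (((cont_dentry hs₁ _ _).mul (cont_br hs₂ hs₃ _ _)).add
      (((hs₁ _ _).continuous).mul (cont_dbr hs₂ hs₃ _ _)))

private lemma hasDerivAt_F {ξ₁ ξ₂ ξ₃ : ℝ → Matrix (Fin 4) (Fin 4) ℝ}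
    (hs₁ : ∀ i j, ContDiff ℝ (⊤ : ℕ∞) fun θ => ξ₁ θ i j)
    (hs₂ : ∀ i j, ContDiff ℝ (⊤ : ℕ∞) fun θ => ξ₂ θ i j)
    (hs₃ : ∀ i j, ContDiff ℝ (⊤ : ℕ∞) fun θ => ξ₃ θ i j) (θ : ℝ) :
    HasDerivAt (Ffun ξ₁ ξ₂ ξ₃) (Gfun ξ₁ ξ₂ ξ₃ θ) θ := by
  unfold Ffun Gfun
  exact HasDerivAt.fun_sum fun τ _ =>
    ((hasDerivAt_entry hs₁ θ _ _).mul (hasDerivAt_br hs₂ hs₃ θ _ _)).const_mul _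

private lemma alpha_eq (ξ η ζ : ℝ → Matrix (Fin 4) (Fin 4) ℝ)
    (hξ : ∀ i j, ContDiff ℝ (⊤ : ℕ∞) fun θ => ξ θ i j)
    (hη : ∀ i j, ContDiff ℝ (⊤ : ℕ∞) fun θ => η θ i j) :
    loopAlpha (loopBracket ξ η) ζ = (-1 / (128 * π ^ 2)) *
      ∑ τ : Equiv.Perm (Fin 4), ((Equiv.Perm.sign τ : ℤ) : ℝ) *
        ∫ θ in (0:ℝ)..1,
          ((dmat ξ θ * η θ - η θ * dmat ξ θ + (ξ θ * dmat η θ - dmat η θ * ξ θ)) (τ 0) (τ 1)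
              * ζ θ (τ 2) (τ 3)
            - dmat ζ θ (τ 0) (τ 1) * (ξ θ * η θ - η θ * ξ θ) (τ 2) (τ 3)) := by
  unfold loopAlpha
  congr 1
  refine Finset.sum_congr rfl fun τ _ => ?_
  congr 1
  refine intervalIntegral.integral_congr fun θ _ => ?_
  have h1 : deriv (fun t => loopBracket ξ η t (τ 0) (τ 1)) θ
      = (dmat ξ θ * η θ - η θ * dmat ξ θ + (ξ θ * dmat η θ - dmat η θ * ξ θ)) (τ 0) (τ 1) := by
    have : (fun t => loopBracket ξ η t (τ 0) (τ 1))
        = fun t => (ξ t * η t - η t * ξ t) (τ 0) (τ 1) := rfl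
    rw [this]
    exact (hasDerivAt_br hξ hη θ (τ 0) (τ 1)).deriv
  rw [h1]
  rfl

private lemma sum_integral_cancel (f g h : Equiv.Perm (Fin 4) → ℝ → ℝ) (F G : ℝ → ℝ)
    (hf : ∀ τ, Continuous (f τ)) (hg : ∀ τ, Continuous (g τ)) (hh : ∀ τ, Continuous (h τ))
    (hG : Continuous G)
    (hkey : ∀ θ : ℝ,
      (∑ τ : Equiv.Perm (Fin 4), ((Equiv.Perm.sign τ : ℤ) : ℝ) * f τ θ)
        + (∑ τ : Equiv.Perm (Fin 4), ((Equiv.Perm.sign τ : ℤ) : ℝ) * g τ θ)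
        + (∑ τ : Equiv.Perm (Fin 4), ((Equiv.Perm.sign τ : ℤ) : ℝ) * h τ θ) = G θ)
    (hF : ∀ θ : ℝ, HasDerivAt F (G θ) θ) (hFper : F 1 = F 0) :
    (∑ τ : Equiv.Perm (Fin 4), ((Equiv.Perm.sign τ : ℤ) : ℝ) * ∫ θ in (0:ℝ)..1, f τ θ)
      + (∑ τ : Equiv.Perm (Fin 4), ((Equiv.Perm.sign τ : ℤ) : ℝ) * ∫ θ in (0:ℝ)..1, g τ θ)
      + (∑ τ : Equiv.Perm (Fin 4), ((Equiv.Perm.sign τ : ℤ) : ℝ) * ∫ θ in (0:ℝ)..1, h τ θ)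
      = 0 := by
  have conv : ∀ u : Equiv.Perm (Fin 4) → ℝ → ℝ, (∀ τ, Continuous (u τ)) →
      (∑ τ : Equiv.Perm (Fin 4), ((Equiv.Perm.sign τ : ℤ) : ℝ) * ∫ θ in (0:ℝ)..1, u τ θ)
      = ∫ θ in (0:ℝ)..1,
          ∑ τ : Equiv.Perm (Fin 4), ((Equiv.Perm.sign τ : ℤ) : ℝ) * u τ θ := by
    intro u hu
    rw [intervalIntegral.integral_finset_sum (f := fun τ θ => ((Equiv.Perm.sign τ : ℤ) : ℝ) * u τ θ)
      (fun τ _ => (continuous_const.mul (hu τ)).intervalIntegrable _ _)]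
    exact Finset.sum_congr rfl fun τ _ => (intervalIntegral.integral_const_mul _ _).symm
  have int1 : IntervalIntegrable
      (fun θ => ∑ τ : Equiv.Perm (Fin 4), ((Equiv.Perm.sign τ : ℤ) : ℝ) * f τ θ)
      MeasureTheory.volume 0 1 :=
    (continuous_finset_sum _ fun τ _ => continuous_const.mul (hf τ)).intervalIntegrable _ _
  have int2 : IntervalIntegrable
      (fun θ => ∑ τ : Equiv.Perm (Fin 4), ((Equiv.Perm.sign τ : ℤ) : ℝ) * g τ θ)
      MeasureTheory.volume 0 1 :=
    (continuous_finset_sum _ fun τ _ => continuous_const.mul (hg τ)).intervalIntegrable _ _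
  have int3 : IntervalIntegrable
      (fun θ => ∑ τ : Equiv.Perm (Fin 4), ((Equiv.Perm.sign τ : ℤ) : ℝ) * h τ θ)
      MeasureTheory.volume 0 1 :=
    (continuous_finset_sum _ fun τ _ => continuous_const.mul (hh τ)).intervalIntegrable _ _
  rw [conv f hf, conv g hg, conv h hh, ← intervalIntegral.integral_add int1 int2,
    ← intervalIntegral.integral_add (int1.add int2) int3,
    intervalIntegral.integral_congr (g := G) fun θ _ => hkey θ,
    intervalIntegral.integral_eq_sub_of_hasDerivAt (fun θ _ => hF θ)
      (hG.intervalIntegrable _ _), hFper, sub_self]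

private lemma dmat_skew {ξ : ℝ → Matrix (Fin 4) (Fin 4) ℝ}
    (hk : ∀ θ, (ξ θ)ᵀ = -ξ θ) (θ : ℝ) : (dmat ξ θ)ᵀ = -(dmat ξ θ) := by
  ext i j
  simp only [Matrix.transpose_apply, Matrix.neg_apply, dmat, Matrix.of_apply]
  have e : (fun t => ξ t j i) = fun t => -ξ t i j := by
    funext t
    have := congrFun (congrFun (hk t) i) j
    simpa using this
  rw [e, deriv.fun_neg]

/-- `α` satisfies the Lie algebra 2-cocycle identity on `L𝔰𝔬(4)`. -/
theorem loopAlpha_cocycle (ξ₁ ξ₂ ξ₃ : ℝ → Matrix (Fin 4) (Fin 4) ℝ)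
    (h₁ : IsLoopSO4 ξ₁) (h₂ : IsLoopSO4 ξ₂) (h₃ : IsLoopSO4 ξ₃) :
    loopAlpha (loopBracket ξ₁ ξ₂) ξ₃ + loopAlpha (loopBracket ξ₂ ξ₃) ξ₁ +
      loopAlpha (loopBracket ξ₃ ξ₁) ξ₂ = 0 := by
  obtain ⟨hs₁, hp₁, hk₁⟩ := h₁
  obtain ⟨hs₂, hp₂, hk₂⟩ := h₂
  obtain ⟨hs₃, hp₃, hk₃⟩ := h₃
  rw [alpha_eq ξ₁ ξ₂ ξ₃ hs₁ hs₂, alpha_eq ξ₂ ξ₃ ξ₁ hs₂ hs₃, alpha_eq ξ₃ ξ₁ ξ₂ hs₃ hs₁,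
    ← mul_add, ← mul_add]
  refine mul_eq_zero_of_right _ ?_
  refine sum_integral_cancel _ _ _ (Ffun ξ₁ ξ₂ ξ₃) (Gfun ξ₁ ξ₂ ξ₃) ?_ ?_ ?_
    (cont_G hs₁ hs₂ hs₃) ?_ (hasDerivAt_F hs₁ hs₂ hs₃) ?_
  · exact fun τ => ((cont_dbr hs₁ hs₂ _ _).mul (hs₃ _ _).continuous).sub
      ((cont_dentry hs₃ _ _).mul (cont_br hs₁ hs₂ _ _))
  · exact fun τ => ((cont_dbr hs₂ hs₃ _ _).mul (hs₁ _ _).continuous).sub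
      ((cont_dentry hs₁ _ _).mul (cont_br hs₂ hs₃ _ _))
  · exact fun τ => ((cont_dbr hs₃ hs₁ _ _).mul (hs₂ _ _).continuous).sub
      ((cont_dentry hs₂ _ _).mul (cont_br hs₃ hs₁ _ _))
  · intro θ
    simpa only [Gfun] using
      key (ξ₁ θ) (ξ₂ θ) (ξ₃ θ) (dmat ξ₁ θ) (dmat ξ₂ θ) (dmat ξ₃ θ)
        (hk₁ θ) (hk₂ θ) (hk₃ θ) (dmat_skew hk₁ θ) (dmat_skew hk₂ θ) (dmat_skew hk₃ θ)
  · have e1 : ξ₁ (1:ℝ) = ξ₁ 0 := by simpa using hp₁ 0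
    have e2 : ξ₂ (1:ℝ) = ξ₂ 0 := by simpa using hp₂ 0
    have e3 : ξ₃ (1:ℝ) = ξ₃ 0 := by simpa using hp₃ 0
    simp only [Ffun, e1, e2, e3]
end

section
/- Let c: G → ℝ be a germ at 1 of a smooth function on a Lie group G with c(1) = 0, and let δc(g₁,g₂) = c(g₂) − c(g₁g₂) + c(g₁). Then for ξ₁, ξ₂ in the Lie algebra 𝔤, ∂²/∂y₁∂y₂ |_{y=0} Σ_{ρ∈S₂} sgn(ρ) (δc)(exp(y_{ρ(1)}ξ_{ρ(1)}), exp(y_{ρ(2)}ξ_{ρ(2)})) = −∂²/∂y₁∂y₂|₀ c(exp(y₁ξ₁)exp(y₂ξ₂)) + ∂²/∂y₁∂y₂|₀ c(exp(y₂ξ₂)exp(y₁ξ₁)) = −(dc)₁([ξ₁,ξ₂]). -/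
open NormedSpace

/-- Brylinski's compatibility `φ(δc) = d(φ(c))` in low degree.  Let `c` be (a
germ at `1` of) a smooth function on a matrix Lie group (realized in a Banach
algebra `A`) with `c(1) = 0`, and let `δc(g₁,g₂) = c(g₂) − c(g₁g₂) + c(g₁)`.
Then for `ξ₁, ξ₂` in the Lie algebra,
`∂²/∂y₁∂y₂|₀ Σ_{ρ∈S₂} sgn(ρ) (δc)(exp(y_{ρ(1)}ξ_{ρ(1)}), exp(y_{ρ(2)}ξ_{ρ(2)}))`
(written out as `δc(exp(y₁ξ₁),exp(y₂ξ₂)) − δc(exp(y₂ξ₂),exp(y₁ξ₁))`)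
equals
`−∂²/∂y₁∂y₂|₀ c(exp(y₁ξ₁)exp(y₂ξ₂)) + ∂²/∂y₁∂y₂|₀ c(exp(y₂ξ₂)exp(y₁ξ₁))`,
which equals `−(dc)₁([ξ₁,ξ₂])`. -/
theorem brylinski_delta_compat {A : Type*} [NormedRing A] [NormedAlgebra ℝ A]
    [CompleteSpace A] (c : A → ℝ) (hc : ContDiff ℝ (⊤ : ℕ∞) c) (hc1 : c 1 = 0)
    (ξ₁ ξ₂ : A)
    (δc : A → A → ℝ) (hδc : ∀ g₁ g₂, δc g₁ g₂ = c g₂ - c (g₁ * g₂) + c g₁) :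
    deriv (fun y₁ : ℝ => deriv (fun y₂ : ℝ =>
        δc (exp (y₁ • ξ₁)) (exp (y₂ • ξ₂))
          - δc (exp (y₂ • ξ₂)) (exp (y₁ • ξ₁))) 0) 0
      = deriv (fun y₁ : ℝ => deriv (fun y₂ : ℝ =>
          -c (exp (y₁ • ξ₁) * exp (y₂ • ξ₂))
            + c (exp (y₂ • ξ₂) * exp (y₁ • ξ₁))) 0) 0
      ∧
      deriv (fun y₁ : ℝ => deriv (fun y₂ : ℝ =>
        δc (exp (y₁ • ξ₁)) (exp (y₂ • ξ₂))
          - δc (exp (y₂ • ξ₂)) (exp (y₁ • ξ₁))) 0) 0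
      = -(fderiv ℝ c 1 (ξ₁ * ξ₂ - ξ₂ * ξ₁)) := by
  have hcd : Differentiable ℝ c := hc.differentiable (by simp)
  have hDc : ContDiff ℝ (⊤ : ℕ∞) (fderiv ℝ c) := hc.fderiv_right (by simp)
  have e0 : ∀ ξ : A, exp ((0 : ℝ) • ξ) = 1 := by
    intro ξ; simp [exp_zero]
  -- first conjunct : the two inner functions agree pointwise
  have hfun :
      (fun y₁ : ℝ => deriv (fun y₂ : ℝ =>
        δc (exp (y₁ • ξ₁)) (exp (y₂ • ξ₂))
          - δc (exp (y₂ • ξ₂)) (exp (y₁ • ξ₁))) 0)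
      = (fun y₁ : ℝ => deriv (fun y₂ : ℝ =>
          -c (exp (y₁ • ξ₁) * exp (y₂ • ξ₂))
            + c (exp (y₂ • ξ₂) * exp (y₁ • ξ₁))) 0) := by
    funext y₁
    congr 1
    funext y₂
    rw [hδc, hδc]; ring
  refine ⟨by rw [hfun], ?_⟩
  rw [hfun]
  -- derivative of `exp` at 0
  have hexp0 : ∀ ξ : A, HasDerivAt (fun y : ℝ => exp (y • ξ)) ξ 0 := by
    intro ξ
    simpa [e0 ξ] using hasDerivAt_exp_smul_const ξ (0 : ℝ)
  -- inner derivative computed for each y₁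
  have hinner : ∀ y₁ : ℝ,
      deriv (fun y₂ : ℝ =>
          -c (exp (y₁ • ξ₁) * exp (y₂ • ξ₂))
            + c (exp (y₂ • ξ₂) * exp (y₁ • ξ₁))) 0
        = -(fderiv ℝ c (exp (y₁ • ξ₁)) (exp (y₁ • ξ₁) * ξ₂))
            + fderiv ℝ c (exp (y₁ • ξ₁)) (ξ₂ * exp (y₁ • ξ₁)) := by
    intro y₁
    set a := exp (y₁ • ξ₁) with ha
    have h1 : HasDerivAt (fun y₂ : ℝ => c (a * exp (y₂ • ξ₂)))
        (fderiv ℝ c a (a * ξ₂)) 0 := by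
      have hm : HasDerivAt (fun y₂ : ℝ => a * exp (y₂ • ξ₂)) (a * ξ₂) 0 :=
        (hexp0 ξ₂).const_mul a
      have hC : HasFDerivAt c (fderiv ℝ c a) ((fun y₂ : ℝ => a * exp (y₂ • ξ₂)) 0) := by
        simpa [e0 ξ₂] using (hcd a).hasFDerivAt
      exact hC.comp_hasDerivAt 0 hm
    have h2 : HasDerivAt (fun y₂ : ℝ => c (exp (y₂ • ξ₂) * a))
        (fderiv ℝ c a (ξ₂ * a)) 0 := by
      have hm : HasDerivAt (fun y₂ : ℝ => exp (y₂ • ξ₂) * a) (ξ₂ * a) 0 :=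
        (hexp0 ξ₂).mul_const a
      have hC : HasFDerivAt c (fderiv ℝ c a) ((fun y₂ : ℝ => exp (y₂ • ξ₂) * a) 0) := by
        simpa [e0 ξ₂] using (hcd a).hasFDerivAt
      exact hC.comp_hasDerivAt 0 hm
    exact (h1.neg.add h2).deriv
  -- now compute the outer derivative
  have hDd : HasDerivAt (fun y₁ : ℝ => fderiv ℝ c (exp (y₁ • ξ₁)))
      (fderiv ℝ (fderiv ℝ c) 1 ξ₁) 0 := by
    have hF : HasFDerivAt (fderiv ℝ c) (fderiv ℝ (fderiv ℝ c) 1)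
        ((fun y₁ : ℝ => exp (y₁ • ξ₁)) 0) := by
      simpa [e0 ξ₁] using ((hDc.differentiable (by simp)) 1).hasFDerivAt
    exact hF.comp_hasDerivAt 0 (hexp0 ξ₁)
  have hu1 : HasDerivAt (fun y₁ : ℝ => exp (y₁ • ξ₁) * ξ₂) (ξ₁ * ξ₂) 0 :=
    (hexp0 ξ₁).mul_const ξ₂
  have hu2 : HasDerivAt (fun y₁ : ℝ => ξ₂ * exp (y₁ • ξ₁)) (ξ₂ * ξ₁) 0 :=
    (hexp0 ξ₁).const_mul ξ₂
  have hT1 : HasDerivAt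
      (fun y₁ : ℝ => fderiv ℝ c (exp (y₁ • ξ₁)) (exp (y₁ • ξ₁) * ξ₂))
      (fderiv ℝ (fderiv ℝ c) 1 ξ₁ ((fun y₁ : ℝ => exp (y₁ • ξ₁) * ξ₂) 0)
        + fderiv ℝ c (exp ((0:ℝ) • ξ₁)) (ξ₁ * ξ₂)) 0 :=
    hDd.clm_apply hu1
  have hT2 : HasDerivAt
      (fun y₁ : ℝ => fderiv ℝ c (exp (y₁ • ξ₁)) (ξ₂ * exp (y₁ • ξ₁)))
      (fderiv ℝ (fderiv ℝ c) 1 ξ₁ ((fun y₁ : ℝ => ξ₂ * exp (y₁ • ξ₁)) 0)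
        + fderiv ℝ c (exp ((0:ℝ) • ξ₁)) (ξ₂ * ξ₁)) 0 :=
    hDd.clm_apply hu2
  have hfinal := (hT1.neg.add hT2).deriv
  calc deriv (fun y₁ : ℝ => deriv (fun y₂ : ℝ =>
          -c (exp (y₁ • ξ₁) * exp (y₂ • ξ₂))
            + c (exp (y₂ • ξ₂) * exp (y₁ • ξ₁))) 0) 0
      = deriv (fun y₁ : ℝ =>
          -(fderiv ℝ c (exp (y₁ • ξ₁)) (exp (y₁ • ξ₁) * ξ₂))
            + fderiv ℝ c (exp (y₁ • ξ₁)) (ξ₂ * exp (y₁ • ξ₁))) 0 := by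
        congr 1; funext y₁; exact hinner y₁
    _ = -(fderiv ℝ (fderiv ℝ c) 1 ξ₁ ((fun y₁ : ℝ => exp (y₁ • ξ₁) * ξ₂) 0)
            + fderiv ℝ c (exp ((0:ℝ) • ξ₁)) (ξ₁ * ξ₂))
          + (fderiv ℝ (fderiv ℝ c) 1 ξ₁ ((fun y₁ : ℝ => ξ₂ * exp (y₁ • ξ₁)) 0)
            + fderiv ℝ c (exp ((0:ℝ) • ξ₁)) (ξ₂ * ξ₁)) := hfinal
    _ = -(fderiv ℝ c 1 (ξ₁ * ξ₂ - ξ₂ * ξ₁)) := by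
        simp only [e0 ξ₁, one_mul, mul_one, map_sub]
        ring
end

section
/- On the 2-simplex with barycentric coordinates (t₀,t₁,t₂), for a Lie-algebra-valued 1-form θ = t₀θ₀ + t₁θ₁ + t₂θ₂ (with Maurer–Cartan factors θ_i satisfying dθ_i + θ_i² = 0), the curvature Ω = dθ + θ² equals −Σ_{i=1}^{2} dt_i ∧ (θ₀ − θ_i) − Σ_{0≤i<j≤2} t_i t_j (θ_i − θ_j)². -/
/-- The curvature of `θ = t₀θ₀ + t₁θ₁ + t₂θ₂` on the 2-simplex.  We work in the
(noncommutative) algebra `A` of matrix-valued differential forms on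
`Δ² × NḠ(2)`, with `d` the exterior differential.  The barycentric coordinates
`t₀, t₁, t₂` are degree-0 scalar functions (hence central), `t₀ + t₁ + t₂ = 1`,
each `θᵢ` is a pulled-back Maurer–Cartan form, so `dθᵢ = −θᵢ²`, and the Leibniz
rule `d(tᵢθⱼ) = dtᵢ·θⱼ + tᵢ·dθⱼ` holds for the degree-0 factors `tᵢ`.  Then
`Ω = dθ + θ²` equals
`−Σ_{i=1}^{2} dtᵢ ∧ (θ₀ − θᵢ) − Σ_{0≤i<j≤2} tᵢtⱼ (θᵢ − θⱼ)²`. -/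
theorem simplicial_curvature_formula {A : Type*} [Ring A]
    (d : A → A) (t θ : Fin 3 → A)
    (hd_add : ∀ x y, d (x + y) = d x + d y)
    (hd_one : d 1 = 0)
    (ht_central : ∀ i x, Commute (t i) x)
    (ht_sum : t 0 + t 1 + t 2 = 1)
    (hMC : ∀ i, d (θ i) = -(θ i * θ i))
    (hLeibniz : ∀ i j, d (t i * θ j) = d (t i) * θ j + t i * d (θ j)) :
    d (t 0 * θ 0 + t 1 * θ 1 + t 2 * θ 2)
        + (t 0 * θ 0 + t 1 * θ 1 + t 2 * θ 2) * (t 0 * θ 0 + t 1 * θ 1 + t 2 * θ 2)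
      = -(d (t 1) * (θ 0 - θ 1) + d (t 2) * (θ 0 - θ 2))
        - (t 0 * t 1 * ((θ 0 - θ 1) * (θ 0 - θ 1))
          + t 0 * t 2 * ((θ 0 - θ 2) * (θ 0 - θ 2))
          + t 1 * t 2 * ((θ 1 - θ 2) * (θ 1 - θ 2))) := by
  have swap : ∀ i j : Fin 3, θ i * t j = t j * θ i :=
    fun i j => (ht_central j (θ i)).eq.symm
  have hst10 : t 1 * t 0 = t 0 * t 1 := (ht_central 1 (t 0)).eq
  have hst20 : t 2 * t 0 = t 0 * t 2 := (ht_central 2 (t 0)).eq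
  have hst21 : t 2 * t 1 = t 1 * t 2 := (ht_central 2 (t 1)).eq
  have hij : ∀ i j : Fin 3, (t i * θ i) * (t j * θ j) = t i * t j * (θ i * θ j) := by
    intro i j
    rw [mul_assoc, ← mul_assoc (θ i), swap i j, mul_assoc, ← mul_assoc, ← mul_assoc]
  -- d(t0) = -d(t1) - d(t2)
  have hd0sum : d (t 0) + d (t 1) + d (t 2) = 0 := by
    rw [← hd_add, ← hd_add, ht_sum, hd_one]
  have hd0 : d (t 0) = -d (t 1) - d (t 2) := by
    have h : d (t 0) + (d (t 1) + d (t 2)) = 0 := by rw [← add_assoc]; exact hd0sum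
    rw [eq_neg_of_add_eq_zero_left h, neg_add, sub_eq_add_neg]
  -- the t-expansions
  have s0 : t 0 * t 0 + t 0 * t 1 + t 0 * t 2 = t 0 := by
    rw [← mul_add, ← mul_add]
    rw [ht_sum, mul_one]
  have s1 : t 0 * t 1 + t 1 * t 1 + t 1 * t 2 = t 1 := by
    rw [← hst21, ← add_mul, ← add_mul, ht_sum, one_mul]
  have s2 : t 0 * t 2 + t 1 * t 2 + t 2 * t 2 = t 2 := by
    rw [← add_mul, ← add_mul, ht_sum, one_mul]
  have e0 : t 0 * (θ 0 * θ 0) = (t 0 * t 0 + t 0 * t 1 + t 0 * t 2) * (θ 0 * θ 0) := by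
    rw [s0]
  have e1 : t 1 * (θ 1 * θ 1) = (t 0 * t 1 + t 1 * t 1 + t 1 * t 2) * (θ 1 * θ 1) := by
    rw [s1]
  have e2 : t 2 * (θ 2 * θ 2) = (t 0 * t 2 + t 1 * t 2 + t 2 * t 2) * (θ 2 * θ 2) := by
    rw [s2]
  have hsq : (t 0 * θ 0 + t 1 * θ 1 + t 2 * θ 2) * (t 0 * θ 0 + t 1 * θ 1 + t 2 * θ 2)
      = t 0 * t 0 * (θ 0 * θ 0) + t 0 * t 1 * (θ 0 * θ 1) + t 0 * t 2 * (θ 0 * θ 2)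
        + (t 0 * t 1 * (θ 1 * θ 0) + t 1 * t 1 * (θ 1 * θ 1) + t 1 * t 2 * (θ 1 * θ 2))
        + (t 0 * t 2 * (θ 2 * θ 0) + t 1 * t 2 * (θ 2 * θ 1) + t 2 * t 2 * (θ 2 * θ 2)) := by
    simp only [add_mul, mul_add, hij, hst10, hst20, hst21]
    abel
  rw [hd_add, hd_add, hLeibniz, hLeibniz, hLeibniz, hMC, hMC, hMC, hd0, hsq]
  simp only [mul_neg]
  rw [e0, e1, e2]
  noncomm_ring
end

section
/- Infinitesimal invariance of the polarized Pfaffian: for A₁,…,A_p, X ∈ 𝔰𝔬(2p), Σ_{k=1}^{p} Pf(A₁,…,[X,A_k],…,A_p) = 0, where Pf(A₁,…,A_p) := Σ_{τ∈S_{2p}} sgn(τ) (A₁)_{τ(1)τ(2)}⋯(A_p)_{τ(2p-1)τ(2p)}. -/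
open scoped Matrix

/-- The polarized Pfaffian
`Pf(A₁,…,A_p) = Σ_{τ∈S_{2p}} sgn(τ) (A₁)_{τ(1)τ(2)} ⋯ (A_p)_{τ(2p-1)τ(2p)}`. -/
noncomputable def polPfaffian (p : ℕ)
    (A : Fin p → Matrix (Fin (2 * p)) (Fin (2 * p)) ℝ) : ℝ :=
  ∑ τ : Equiv.Perm (Fin (2 * p)), ((Equiv.Perm.sign τ : ℤ) : ℝ) *
    ∏ k : Fin p, A k (τ ⟨2 * k.1, by have := k.isLt; omega⟩)
      (τ ⟨2 * k.1 + 1, by have := k.isLt; omega⟩)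

namespace PfAux

variable {p : ℕ}

/-- first element of pair `k` -/
def pa (k : Fin p) : Fin (2 * p) := ⟨2 * k.1, by have := k.2; omega⟩
/-- second element of pair `k` -/
def pb (k : Fin p) : Fin (2 * p) := ⟨2 * k.1 + 1, by have := k.2; omega⟩
/-- the pair of a position -/
def pr (r : Fin (2 * p)) : Fin p := ⟨r.1 / 2, by have := r.2; omega⟩
/-- the partner of a position -/
def ptn (r : Fin (2 * p)) : Fin (2 * p) :=
  ⟨2 * (r.1 / 2) + (1 - r.1 % 2), by have := r.2; omega⟩
/-- sign of a position: `+1` for even, `-1` for odd -/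
def sgn (r : Fin (2 * p)) : ℝ := if r.1 % 2 = 0 then 1 else -1

lemma ptn_ptn (r : Fin (2 * p)) : ptn (ptn r) = r := by
  simp only [ptn]; ext; simp only []; omega

lemma ptn_ne (r : Fin (2 * p)) : ptn r ≠ r := by
  simp only [ptn, Fin.ne_iff_vne]; omega

lemma pr_pa (k : Fin p) : pr (pa k) = k := by
  simp only [pr, pa]; ext; simp only []; omega

lemma pr_pb (k : Fin p) : pr (pb k) = k := by
  simp only [pr, pb]; ext; simp only []; omega

lemma ptn_pa (k : Fin p) : ptn (pa k) = pb k := by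
  simp only [ptn, pa, pb]; ext; simp only []; omega

lemma ptn_pb (k : Fin p) : ptn (pb k) = pa k := by
  simp only [ptn, pa, pb]; ext; simp only []; omega

lemma sgn_pa (k : Fin p) : sgn (pa k) = 1 := by
  have h : (2 * k.1) % 2 = 0 := by omega
  simp [sgn, pa, h]

lemma sgn_pb (k : Fin p) : sgn (pb k) = -1 := by
  have h : (2 * k.1 + 1) % 2 = 1 := by omega
  simp [sgn, pb, h]

lemma even_case (r : Fin (2 * p)) (h : r.1 % 2 = 0) :
    pa (pr r) = r ∧ pb (pr r) = ptn r := by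
  constructor <;> (simp only [pa, pb, pr, ptn]; ext; simp only []; omega)

lemma odd_case (r : Fin (2 * p)) (h : r.1 % 2 = 1) :
    pa (pr r) = ptn r ∧ pb (pr r) = r := by
  constructor <;> (simp only [pa, pb, pr, ptn]; ext; simp only []; omega)

lemma pa_ne_of_pr_ne (j : Fin p) (r : Fin (2 * p)) (h : j ≠ pr r) : pa j ≠ r := by
  intro he; apply h; rw [← he, pr_pa]

lemma pb_ne_of_pr_ne (j : Fin p) (r : Fin (2 * p)) (h : j ≠ pr r) : pb j ≠ r := by
  intro he; apply h; rw [← he, pr_pb]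

/-- skew-symmetry, entrywise -/
lemma skew_apply {M : Matrix (Fin (2 * p)) (Fin (2 * p)) ℝ} (h : Mᵀ = -M)
    (i j : Fin (2 * p)) : M j i = -M i j := by
  have := congrFun (congrFun h i) j
  simpa [Matrix.transpose_apply] using this

lemma skew_diag {M : Matrix (Fin (2 * p)) (Fin (2 * p)) ℝ} (h : Mᵀ = -M)
    (i : Fin (2 * p)) : M i i = 0 := by
  have := skew_apply h i i; linarith

variable (A : Fin p → Matrix (Fin (2 * p)) (Fin (2 * p)) ℝ)
variable (X : Matrix (Fin (2 * p)) (Fin (2 * p)) ℝ)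

/-- the elementary term in the expansion -/
def T (x : Equiv.Perm (Fin (2 * p)) × Fin (2 * p) × Fin (2 * p)) : ℝ :=
  ((Equiv.Perm.sign x.1 : ℤ) : ℝ) * sgn x.2.1 * X (x.1 x.2.1) (x.1 x.2.2) *
    A (pr x.2.1) (x.1 x.2.2) (x.1 (ptn x.2.1)) *
    ∏ j ∈ Finset.univ.erase (pr x.2.1), A j (x.1 (pa j)) (x.1 (pb j))

/-- the pairing-off equiv `Fin p × Fin 2 ≃ Fin (2p)` -/
def pairEquiv : Fin p × Fin 2 ≃ Fin (2 * p) where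
  toFun x := ⟨2 * x.1.1 + x.2.1, by have := x.1.2; have := x.2.2; omega⟩
  invFun r := (⟨r.1 / 2, by have := r.2; omega⟩, ⟨r.1 % 2, by omega⟩)
  left_inv x := by
    have := x.2.2
    ext <;> simp only [] <;> omega
  right_inv r := by ext; simp only []; omega

lemma sum_pairs (h : Fin (2 * p) → ℝ) :
    ∑ r : Fin (2 * p), h r = ∑ k : Fin p, (h (pa k) + h (pb k)) := by
  rw [← Equiv.sum_comp (pairEquiv (p := p)) h, Fintype.sum_prod_type]
  refine Finset.sum_congr rfl fun k _ => ?_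
  rw [Fin.sum_univ_two]
  congr 1 <;> (congr 1 <;> first | rfl | (ext; simp [pairEquiv, pa, pb]))

/-- the main cancellation: the term of `(τ, r, m)` cancels the term of
`(τ ∘ swap r m, m, r)`. -/
lemma cancel (hA : ∀ k, (A k)ᵀ = -A k) (hX : Xᵀ = -X)
    (τ : Equiv.Perm (Fin (2 * p))) (r m : Fin (2 * p)) :
    T A X (τ, r, m) + T A X (τ * Equiv.swap r m, m, r) = 0 := by
  classical
  by_cases hrm : r = m
  · subst hrm
    have h1 : Equiv.swap r r = (1 : Equiv.Perm (Fin (2 * p))) := Equiv.swap_self r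
    have h0 : T A X (τ, r, r) = 0 := by
      simp [T, skew_diag hX]
    rw [h1, mul_one, h0, add_zero]
  · by_cases hptn : m = ptn r
    · have t1 : T A X (τ, r, m) = 0 := by
        subst hptn; simp [T, skew_diag (hA (pr r))]
      have t2 : T A X (τ * Equiv.swap r m, m, r) = 0 := by
        subst hptn
        have : ptn (ptn r) = r := ptn_ptn r
        simp [T, this, skew_diag (hA (pr (ptn r)))]
      rw [t1, t2, add_zero]
    · -- main case
      set σ := τ * Equiv.swap r m with hσ
      have hvm : m.1 ≠ r.1 := fun h => hrm (Fin.ext h.symm)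
      have hvptn : m.1 ≠ (ptn r).1 := fun h => hptn (Fin.ext h)
      have hpr : pr m ≠ pr r := by
        intro h
        have hd : m.1 / 2 = r.1 / 2 := congrArg Fin.val h
        have : (ptn r).1 = 2 * (r.1 / 2) + (1 - r.1 % 2) := rfl
        omega
      have hmr : m ≠ r := fun h => hrm h.symm
      have hptnr_ne_m : ptn r ≠ m := fun h => hptn h.symm
      have hptnm_ne_r : ptn m ≠ r := by
        intro h
        apply hptn
        rw [← ptn_ptn m, h]
      have hfix : ∀ x, x ≠ r → x ≠ m → σ x = τ x := fun x h1 h2 => by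
        simp [hσ, Equiv.Perm.mul_apply, Equiv.swap_apply_of_ne_of_ne h1 h2]
      have e1 : σ r = τ m := by simp [hσ, Equiv.Perm.mul_apply]
      have e2 : σ m = τ r := by simp [hσ, Equiv.Perm.mul_apply]
      have e3 : σ (ptn r) = τ (ptn r) := hfix _ (ptn_ne r) hptnr_ne_m
      have e4 : σ (ptn m) = τ (ptn m) := hfix _ hptnm_ne_r (ptn_ne m)
      have esign : ((Equiv.Perm.sign σ : ℤ) : ℝ) =
          -((Equiv.Perm.sign τ : ℤ) : ℝ) := by
        rw [hσ, Equiv.Perm.sign_mul, Equiv.Perm.sign_swap hrm]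
        push_cast
        ring
      have hmem : pr m ∈ Finset.univ.erase (pr r) :=
        Finset.mem_erase.2 ⟨hpr, Finset.mem_univ _⟩
      have hmem' : pr r ∈ Finset.univ.erase (pr m) :=
        Finset.mem_erase.2 ⟨hpr.symm, Finset.mem_univ _⟩
      have P1 : ∏ j ∈ Finset.univ.erase (pr r), A j (τ (pa j)) (τ (pb j)) =
          A (pr m) (τ (pa (pr m))) (τ (pb (pr m))) *
            ∏ j ∈ (Finset.univ.erase (pr r)).erase (pr m),
              A j (τ (pa j)) (τ (pb j)) :=
        (Finset.mul_prod_erase _ _ hmem).symm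
      have P2 : ∏ j ∈ Finset.univ.erase (pr m), A j (σ (pa j)) (σ (pb j)) =
          A (pr r) (σ (pa (pr r))) (σ (pb (pr r))) *
            ∏ j ∈ (Finset.univ.erase (pr m)).erase (pr r),
              A j (σ (pa j)) (σ (pb j)) :=
        (Finset.mul_prod_erase _ _ hmem').symm
      have Qeq : ∏ j ∈ (Finset.univ.erase (pr m)).erase (pr r),
            A j (σ (pa j)) (σ (pb j)) =
          ∏ j ∈ (Finset.univ.erase (pr r)).erase (pr m),
            A j (τ (pa j)) (τ (pb j)) := by
        rw [Finset.erase_right_comm]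
        refine Finset.prod_congr rfl fun j hj => ?_
        have hj1 : j ≠ pr m := (Finset.mem_erase.1 hj).1
        have hj2 : j ≠ pr r := (Finset.mem_erase.1 (Finset.mem_of_mem_erase hj)).1
        rw [hfix _ (pa_ne_of_pr_ne j r hj2) (pa_ne_of_pr_ne j m hj1),
          hfix _ (pb_ne_of_pr_ne j r hj2) (pb_ne_of_pr_ne j m hj1)]
      have E1 : A (pr m) (τ (pa (pr m))) (τ (pb (pr m))) =
          sgn m * A (pr m) (τ m) (τ (ptn m)) := by
        rcases Nat.mod_two_eq_zero_or_one m.1 with hm | hm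
        · obtain ⟨h1, h2⟩ := even_case m hm
          rw [h1, h2]
          simp [sgn, hm]
        · obtain ⟨h1, h2⟩ := odd_case m hm
          rw [h1, h2, skew_apply (hA (pr m))]
          simp [sgn, hm]
      have E2 : A (pr r) (σ (pa (pr r))) (σ (pb (pr r))) =
          sgn r * A (pr r) (τ m) (τ (ptn r)) := by
        rcases Nat.mod_two_eq_zero_or_one r.1 with hr | hr
        · obtain ⟨h1, h2⟩ := even_case r hr
          rw [h1, h2, e1, e3]
          simp [sgn, hr]
        · obtain ⟨h1, h2⟩ := odd_case r hr
          rw [h1, h2, e1, e3, skew_apply (hA (pr r))]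
          simp [sgn, hr]
      show ((Equiv.Perm.sign τ : ℤ) : ℝ) * sgn r * X (τ r) (τ m) *
          A (pr r) (τ m) (τ (ptn r)) *
          ∏ j ∈ Finset.univ.erase (pr r), A j (τ (pa j)) (τ (pb j)) +
        ((Equiv.Perm.sign σ : ℤ) : ℝ) * sgn m * X (σ m) (σ r) *
          A (pr m) (σ r) (σ (ptn m)) *
          ∏ j ∈ Finset.univ.erase (pr m), A j (σ (pa j)) (σ (pb j)) = 0
      rw [P1, P2, Qeq, E1, E2, esign, e1, e2, e4]
      ring

end PfAux

open PfAux in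
/-- Infinitesimal invariance of the polarized Pfaffian: for
`A₁, …, A_p, X ∈ 𝔰𝔬(2p)`, `Σ_{k=1}^{p} Pf(A₁,…,[X,A_k],…,A_p) = 0`. -/
theorem polPfaffian_infinitesimal_invariance (p : ℕ)
    (A : Fin p → Matrix (Fin (2 * p)) (Fin (2 * p)) ℝ)
    (X : Matrix (Fin (2 * p)) (Fin (2 * p)) ℝ)
    (hA : ∀ k, (A k)ᵀ = -A k) (hX : Xᵀ = -X) :
    ∑ k : Fin p,
      polPfaffian p (Function.update A k (X * A k - A k * X)) = 0 := by
  classical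
  have unf : ∀ B : Fin p → Matrix (Fin (2 * p)) (Fin (2 * p)) ℝ,
      polPfaffian p B = ∑ τ : Equiv.Perm (Fin (2 * p)),
        ((Equiv.Perm.sign τ : ℤ) : ℝ) * ∏ k : Fin p, B k (τ (pa k)) (τ (pb k)) :=
    fun B => rfl
  have step1 : ∑ k : Fin p,
      polPfaffian p (Function.update A k (X * A k - A k * X)) =
      ∑ x : Equiv.Perm (Fin (2 * p)) × Fin (2 * p) × Fin (2 * p), T A X x := by
    calc ∑ k : Fin p, polPfaffian p (Function.update A k (X * A k - A k * X))
        = ∑ k : Fin p, ∑ τ : Equiv.Perm (Fin (2 * p)),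
            ((Equiv.Perm.sign τ : ℤ) : ℝ) *
              ((X * A k - A k * X) (τ (pa k)) (τ (pb k)) *
                ∏ j ∈ Finset.univ.erase k, A j (τ (pa j)) (τ (pb j))) := by
          refine Finset.sum_congr rfl fun k _ => ?_
          rw [unf]
          refine Finset.sum_congr rfl fun τ _ => ?_
          congr 1
          rw [← Finset.mul_prod_erase Finset.univ _ (Finset.mem_univ k)]
          congr 1
          · rw [Function.update_self]
          · exact Finset.prod_congr rfl fun j hj => by
              rw [Function.update_of_ne (Finset.mem_erase.1 hj).1]
      _ = ∑ τ : Equiv.Perm (Fin (2 * p)), ∑ k : Fin p,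
            ((Equiv.Perm.sign τ : ℤ) : ℝ) *
              ((X * A k - A k * X) (τ (pa k)) (τ (pb k)) *
                ∏ j ∈ Finset.univ.erase k, A j (τ (pa j)) (τ (pb j))) :=
          Finset.sum_comm
      _ = ∑ τ : Equiv.Perm (Fin (2 * p)), ∑ k : Fin p,
            ((∑ m : Fin (2 * p), T A X (τ, pa k, m)) +
              ∑ m : Fin (2 * p), T A X (τ, pb k, m)) := by
          refine Finset.sum_congr rfl fun τ _ => Finset.sum_congr rfl fun k _ => ?_
          have hB : (X * A k - A k * X) (τ (pa k)) (τ (pb k)) =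
              ∑ m : Fin (2 * p),
                (X (τ (pa k)) (τ m) * A k (τ m) (τ (pb k)) -
                  X (τ (pb k)) (τ m) * A k (τ m) (τ (pa k))) := by
            rw [Matrix.sub_apply, Matrix.mul_apply, Matrix.mul_apply,
              ← Finset.sum_sub_distrib]
            rw [← Equiv.sum_comp τ (fun c => X (τ (pa k)) c * A k c (τ (pb k)) -
              A k (τ (pa k)) c * X c (τ (pb k)))]
            refine Finset.sum_congr rfl fun m _ => ?_
            rw [skew_apply (hA k) (τ m) (τ (pa k)), skew_apply hX (τ (pb k)) (τ m)]
            ring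
          rw [hB, ← Finset.sum_add_distrib, Finset.sum_mul, Finset.mul_sum]
          refine Finset.sum_congr rfl fun m _ => ?_
          simp only [T, pr_pa, pr_pb, ptn_pa, ptn_pb, sgn_pa, sgn_pb]
          ring
      _ = ∑ τ : Equiv.Perm (Fin (2 * p)), ∑ r : Fin (2 * p), ∑ m : Fin (2 * p),
            T A X (τ, r, m) := by
          refine Finset.sum_congr rfl fun τ _ => ?_
          rw [sum_pairs (fun r => ∑ m : Fin (2 * p), T A X (τ, r, m))]
      _ = ∑ x : Equiv.Perm (Fin (2 * p)) × Fin (2 * p) × Fin (2 * p), T A X x := by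
          rw [Fintype.sum_prod_type]
          exact Finset.sum_congr rfl fun τ _ =>
            (Fintype.sum_prod_type
              (f := fun y : Fin (2 * p) × Fin (2 * p) => T A X (τ, y))).symm
  rw [step1]
  refine Finset.sum_ninvolution
    (fun x => (x.1 * Equiv.swap x.2.1 x.2.2, x.2.2, x.2.1))
    (fun x => cancel A X hA hX x.1 x.2.1 x.2.2) ?_ (fun _ => Finset.mem_univ _) ?_
  · rintro ⟨τ, r, m⟩ hf he
    apply hf
    have hm : m = r := congrArg (fun y => y.2.1) he
    subst hm
    simp [T, skew_diag hX]
  · rintro ⟨τ, r, m⟩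
    show ((τ * Equiv.swap r m) * Equiv.swap m r, r, m) = (τ, r, m)
    rw [Equiv.swap_comm m r, mul_assoc, Equiv.swap_mul_self, mul_one]
end
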